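/- If T is a bounded linear operator on a complex Hilbert space with Cartesian decomposition T = A + iB, then √(2(‖A‖⁴ + ‖B‖⁴)) ≤ 2 ω(T)². -/

import Mathlib

open scoped InnerProductSpace
open ContinuousLinearMap

variable {H : Type*} [NormedAddCommGroup H] [InnerProductSpace ℂ H] [CompleteSpace H]

/-- The numerical radius of a bounded operator. -/
noncomputable def numRadius (T : H →L[ℂ] H) : ℝ :=
  ⨆ x : {x : H // ‖x‖ = 1}, ‖⟪T x.1, x.1⟫_ℂ‖

/-- The absolute value |A| = (A*A)^(1/2). -/
noncomputable def opAbs (A : H →L[ℂ] H) : H →L[ℂ] H := CFC.sqrt (adjoint A * A)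

/-- Real part of the Cartesian decomposition. -/
noncomputable def reP (T : H →L[ℂ] H) : H →L[ℂ] H := (2:ℂ)⁻¹ • (T + adjoint T)

/-- Imaginary part of the Cartesian decomposition. -/
noncomputable def imP (T : H →L[ℂ] H) : H →L[ℂ] H := (2*Complex.I:ℂ)⁻¹ • (T - adjoint T)


/-! The real and imaginary parts `A`, `B` of `T` are self-adjoint, and their quadratic forms are the
real part and minus the imaginary part of `⟪T x, x⟫`. As the norm of a self-adjoint operator is the
supremum of its quadratic form over the unit sphere, `‖A‖ ≤ ω(T)` and `‖B‖ ≤ ω(T)`, so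
`2 (‖A‖⁴ + ‖B‖⁴) ≤ 4 ω(T)⁴`. -/

theorem ContinuousLinearMap.norm_le_of_abs_re_inner_self_le {𝕜 E : Type*} [RCLike 𝕜]
    [NormedAddCommGroup E] [InnerProductSpace 𝕜 E] {S : E →L[𝕜] E}
    (hS : (S : E →ₗ[𝕜] E).IsSymmetric) {M : ℝ} (hM : 0 ≤ M)
    (h : ∀ x, |RCLike.re ⟪S x, x⟫_𝕜| ≤ M * ‖x‖ ^ 2) : ‖S‖ ≤ M := by
  rw [S.norm_eq_iSup_rayleighQuotient hS]
  refine ciSup_le fun x => ?_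
  rcases eq_or_ne x 0 with rfl | hx
  · simpa using hM
  · rw [rayleighQuotient, reApplyInnerSelf_apply, abs_div, abs_sq, div_le_iff₀ (by positivity)]
    exact h x

theorem ContinuousLinearMap.norm_inner_apply_self_le_opNorm {𝕜 E : Type*} [RCLike 𝕜]
    [NormedAddCommGroup E] [InnerProductSpace 𝕜 E] (T : E →L[𝕜] E) {x : E} (hx : ‖x‖ = 1) :
    ‖⟪T x, x⟫_𝕜‖ ≤ ‖T‖ := by
  simpa [hx] using (norm_inner_le_norm (T x) x).trans
    (mul_le_mul_of_nonneg_right (T.le_opNorm x) (norm_nonneg x))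

section NumRadius

variable {E : Type*} [NormedAddCommGroup E] [InnerProductSpace ℂ E]

theorem numRadius_nonneg (T : E →L[ℂ] E) : 0 ≤ numRadius T :=
  Real.iSup_nonneg fun _ => norm_nonneg _

theorem norm_inner_apply_self_le_numRadius (T : E →L[ℂ] E) {x : E} (hx : ‖x‖ = 1) :
    ‖⟪T x, x⟫_ℂ‖ ≤ numRadius T :=
  le_ciSup (f := fun x : {x : E // ‖x‖ = 1} => ‖⟪T x.1, x.1⟫_ℂ‖)
    ⟨‖T‖, by rintro _ ⟨x, rfl⟩; exact T.norm_inner_apply_self_le_opNorm x.2⟩ ⟨x, hx⟩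

theorem norm_inner_apply_self_le_numRadius_mul_sq (T : E →L[ℂ] E) (x : E) :
    ‖⟪T x, x⟫_ℂ‖ ≤ numRadius T * ‖x‖ ^ 2 := by
  rcases eq_or_ne x 0 with rfl | hx
  · simp
  have hx' : ‖x‖ ≠ 0 := norm_ne_zero_iff.mpr hx
  have hunit : ‖(‖x‖⁻¹ : ℂ) • x‖ = 1 := by
    rw [norm_smul, norm_inv, Complex.norm_real, norm_norm, inv_mul_cancel₀ hx']
  have := norm_inner_apply_self_le_numRadius T hunit
  rw [map_smul, inner_smul_left, inner_smul_right, norm_mul, norm_mul, Complex.norm_conj,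
    norm_inv, Complex.norm_real, norm_norm, ← mul_assoc, ← sq, inv_pow,
    inv_mul_le_iff₀ (by positivity)] at this
  linarith

end NumRadius

theorem isSelfAdjoint_reP (T : H →L[ℂ] H) : IsSelfAdjoint (reP T) := by
  rw [reP, IsSelfAdjoint, star_smul, star_add, ← star_eq_adjoint, star_star, add_comm]
  congr 1
  simp

theorem isSelfAdjoint_imP (T : H →L[ℂ] H) : IsSelfAdjoint (imP T) := by
  rw [imP, IsSelfAdjoint, star_smul, star_sub, ← star_eq_adjoint, star_star, ← neg_sub, smul_neg,
    ← neg_smul]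
  congr 1
  simp

theorem re_inner_reP_apply_self (T : H →L[ℂ] H) (x : H) :
    RCLike.re ⟪reP T x, x⟫_ℂ = RCLike.re ⟪T x, x⟫_ℂ := by
  rw [reP, smul_apply, add_apply, inner_smul_left, inner_add_left, adjoint_inner_left,
    ← inner_conj_symm x (T x), Complex.add_conj]
  simp

theorem re_inner_imP_apply_self (T : H →L[ℂ] H) (x : H) :
    RCLike.re ⟪imP T x, x⟫_ℂ = -RCLike.im ⟪T x, x⟫_ℂ := by
  rw [imP, smul_apply, sub_apply, inner_smul_left, inner_sub_left, adjoint_inner_left,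
    ← inner_conj_symm x (T x), Complex.sub_conj]
  simp

theorem norm_reP_le_numRadius (T : H →L[ℂ] H) : ‖reP T‖ ≤ numRadius T :=
  norm_le_of_abs_re_inner_self_le (isSelfAdjoint_reP T).isSymmetric (numRadius_nonneg T)
    fun x => by
      rw [re_inner_reP_apply_self]
      exact (RCLike.abs_re_le_norm _).trans (norm_inner_apply_self_le_numRadius_mul_sq T x)

theorem norm_imP_le_numRadius (T : H →L[ℂ] H) : ‖imP T‖ ≤ numRadius T :=
  norm_le_of_abs_re_inner_self_le (isSelfAdjoint_imP T).isSymmetric (numRadius_nonneg T)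
    fun x => by
      rw [re_inner_imP_apply_self, abs_neg]
      exact (RCLike.abs_im_le_norm _).trans (norm_inner_apply_self_le_numRadius_mul_sq T x)

theorem stmt_17 (T : H →L[ℂ] H) :
    Real.sqrt (2 * (‖reP T‖ ^ 4 + ‖imP T‖ ^ 4)) ≤ 2 * numRadius T ^ 2 := by
  have hA : ‖reP T‖ ^ 4 ≤ numRadius T ^ 4 := by gcongr; exact norm_reP_le_numRadius T
  have hB : ‖imP T‖ ^ 4 ≤ numRadius T ^ 4 := by gcongr; exact norm_imP_le_numRadius T
  rw [Real.sqrt_le_left (by positivity)]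
  linarith
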